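/- Fix ω₀ > 0 and γ > 0. For each integer n ≥ 1 define M_{x,y} = Σ_{j,j'=0}^n Θ(μ_j, μ_{j'}) ψ_j(x) ψ_{j'}(x) ψ_j(y) ψ_{j'}(y) for x, y ∈ {0,…,n}, where Θ(c, c') = [1 + (c − c')²/(8γ²(c + c'))]^{−1}, μ_j = ω₀² + 4 sin²(π j/(2(n+1))), and ψ_j(x) = ((2 − δ_{0,j})/(n+1))^{1/2} cos(π j (2x+1)/(2(n+1))). Then there exists a constant c* > 0, independent of n, such that for every n ≥ 1 and every vector (f₀,…,f_n) ∈ ℝ^{n+1}: Σ_{x,y=0}^n (δ_{x,y} − M_{x,y}) f_x f_y ≥ c* Σ_{x=0}^{n−1} (f_{x+1} − f_x)². -/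

import Mathlib

open Real

noncomputable section

/-- The Neumann eigenvalues shifted by the pinning: `μ_j = ω₀² + 4 sin²(πj/(2(n+1)))`. -/
def muN (n : ℕ) (ω₀ : ℝ) (j : ℕ) : ℝ :=
  ω₀ ^ 2 + 4 * Real.sin (π * j / (2 * (n + 1))) ^ 2

/-- The Neumann eigenvectors `ψ_j(x) = ((2 − δ_{0,j})/(n+1))^{1/2} cos(πj(2x+1)/(2(n+1)))`. -/
def psiN (n j x : ℕ) : ℝ :=
  Real.sqrt ((2 - if j = 0 then 1 else 0) / (n + 1)) *
    Real.cos (π * j * (2 * x + 1) / (2 * (n + 1)))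

/-- `Θ(c, c') = [1 + (c − c')²/(8γ²(c + c'))]⁻¹`. -/
def thetaK (γ c c' : ℝ) : ℝ :=
  (1 + (c - c') ^ 2 / (8 * γ ^ 2 * (c + c')))⁻¹

/-- The kernel `M_{x,y} = Σ_{j,j'} Θ(μ_j, μ_{j'}) ψ_j(x) ψ_{j'}(x) ψ_j(y) ψ_{j'}(y)`. -/
def kerM (n : ℕ) (ω₀ γ : ℝ) (x y : ℕ) : ℝ :=
  ∑ j ∈ Finset.range (n + 1), ∑ j' ∈ Finset.range (n + 1),
    thetaK γ (muN n ω₀ j) (muN n ω₀ j') * psiN n j x * psiN n j' x * psiN n j y * psiN n j' y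

/-!
Write `aⱼⱼ' = ∑ₓ fₓ ψⱼ(x) ψⱼ'(x)`. Since the `ψⱼ` form an orthonormal basis, the quadratic form
of `Id − M` equals `∑ⱼⱼ' (1 − Θ(μⱼ, μⱼ')) aⱼⱼ'²`, and `1 − Θ(μⱼ, μⱼ') ≥ (μⱼ − μⱼ')² / C` with
`C = 8γ²(2ω₀² + 8) + 16` because all `μⱼ` lie in `[ω₀², ω₀² + 4]`. Summation by parts against the
Neumann eigenvalue equation gives `(μⱼ − μⱼ') aⱼⱼ' = ∑ₓ (fₓ₊₁ − fₓ) Wⱼⱼ'(x)` with the discrete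
Wronskian `Wⱼⱼ'(x) = ψⱼ(x+1) ψⱼ'(x) − ψⱼ(x) ψⱼ'(x+1)`, and completeness of the `ψⱼ` once more
gives `∑ⱼⱼ' (∑ₓ gₓ Wⱼⱼ'(x))² = 2 ∑ₓ gₓ²`. Hence the form is at least `(2 / C) ∑ₓ (fₓ₊₁ − fₓ)²`.
-/

open Finset

lemma two_mul_sin_mul_sum_cos_odd (t : ℝ) (N : ℕ) :
    2 * sin t * ∑ x ∈ range N, cos ((2 * x + 1) * t) = sin (2 * N * t) := by
  induction N with
  | zero => simp
  | succ N ih =>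
    rw [sum_range_succ, mul_add, ih]
    have h₁ : 2 * ((N + 1 : ℕ) : ℝ) * t = (2 * N + 1) * t + t := by push_cast; ring
    have h₂ : 2 * (N : ℝ) * t = (2 * N + 1) * t - t := by ring
    rw [h₁, h₂, sin_add, sin_sub]
    ring

lemma sum_cos_odd_mul_pi_div (N : ℕ) {m : ℤ} (hm : |m| < 2 * N) :
    ∑ x ∈ range N, cos ((2 * x + 1) * (m * π / (2 * N))) = if m = 0 then (N : ℝ) else 0 := by
  split_ifs with h0
  · simp [h0]
  have hN : (0 : ℝ) < 2 * N := by
    have : (0 : ℤ) < N := by linarith [abs_nonneg m]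
    have : (0 : ℝ) < N := by exact_mod_cast this
    positivity
  have hsin_top : sin (2 * N * (m * π / (2 * N))) = 0 := by
    rw [mul_div_cancel₀ _ hN.ne']
    exact sin_int_mul_pi m
  have hsin : sin (m * π / (2 * N)) ≠ 0 := by
    have habs : |m * π / (2 * N)| < π := by
      have : |(m : ℝ)| < 2 * N := by exact_mod_cast hm
      rw [abs_div, abs_mul, abs_of_pos pi_pos, abs_of_pos hN, div_lt_iff₀ hN]
      nlinarith [pi_pos]
    rw [abs_lt] at habs
    rw [Ne, sin_eq_zero_iff_of_lt_of_lt habs.1 habs.2]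
    have : (m : ℝ) ≠ 0 := by exact_mod_cast h0
    positivity
  have htelescope := two_mul_sin_mul_sum_cos_odd (m * π / (2 * N)) N
  rw [hsin_top] at htelescope
  exact (mul_eq_zero.mp htelescope).resolve_left (by simpa using hsin)

/-- `φ` solves `-Δφ = κφ` on `ℕ`, the Neumann condition at `0` being the ghost value
`φ (-1) = φ 0`. -/
def IsNeumannEigenfunction (κ : ℝ) (φ : ℕ → ℝ) : Prop :=
  φ 1 = (1 - κ) * φ 0 ∧ ∀ x, φ (x + 2) + φ x = (2 - κ) * φ (x + 1)

def wronskian (φ χ : ℕ → ℝ) (x : ℕ) : ℝ :=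
  φ (x + 1) * χ x - φ x * χ (x + 1)

namespace IsNeumannEigenfunction

variable {κ κ' : ℝ} {φ χ : ℕ → ℝ}

lemma wronskian_zero (hφ : IsNeumannEigenfunction κ φ) (hχ : IsNeumannEigenfunction κ' χ) :
    wronskian φ χ 0 = (κ' - κ) * (φ 0 * χ 0) := by
  rw [wronskian, hφ.1, hχ.1]
  ring

lemma wronskian_succ_sub (hφ : IsNeumannEigenfunction κ φ) (hχ : IsNeumannEigenfunction κ' χ)
    (x : ℕ) : wronskian φ χ (x + 1) - wronskian φ χ x = (κ' - κ) * (φ (x + 1) * χ (x + 1)) := by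
  simp only [wronskian]
  linear_combination χ (x + 1) * hφ.2 x - φ (x + 1) * hχ.2 x

lemma sum_by_parts (hφ : IsNeumannEigenfunction κ φ) (hχ : IsNeumannEigenfunction κ' χ)
    (f : ℕ → ℝ) (k : ℕ) :
    (κ' - κ) * ∑ x ∈ range (k + 1), f x * φ x * χ x =
      f k * wronskian φ χ k - ∑ x ∈ range k, (f (x + 1) - f x) * wronskian φ χ x := by
  induction k with
  | zero => simp [hφ.wronskian_zero hχ]; ring
  | succ k ih =>
    rw [sum_range_succ, mul_add, ih, sum_range_succ]
    linear_combination -f (k + 1) * hφ.wronskian_succ_sub hχ k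

end IsNeumannEigenfunction

lemma isNeumannEigenfunction_cos (s a : ℝ) :
    IsNeumannEigenfunction (4 * sin a ^ 2) fun x => s * cos (a * (2 * x + 1)) := by
  constructor
  · simp only [Nat.cast_one, Nat.cast_zero]
    rw [show a * (2 * 1 + 1) = 3 * a by ring, cos_three_mul, mul_zero, zero_add, mul_one, sin_sq]
    ring
  · intro x
    push_cast
    rw [show a * (2 * (x + 2) + 1) = a * (2 * (x + 1) + 1) + 2 * a by ring,
      show a * (2 * x + 1) = a * (2 * (x + 1) + 1) - 2 * a by ring,
      cos_add, cos_sub, cos_two_mul, cos_sq']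
    ring

lemma sum_sum_sum_sum_comm {α β γ δ M : Type*} [AddCommMonoid M] (s : Finset α) (t : Finset β)
    (u : Finset γ) (v : Finset δ) (F : α → β → γ → δ → M) :
    ∑ a ∈ s, ∑ b ∈ t, ∑ c ∈ u, ∑ d ∈ v, F a b c d =
      ∑ c ∈ u, ∑ d ∈ v, ∑ a ∈ s, ∑ b ∈ t, F a b c d := by
  simp only [← sum_product' s t, ← sum_product' u v]
  exact sum_comm

section OrthonormalSystem

variable {N : ℕ} {ψ : ℕ → ℕ → ℝ}

lemma orthonormal_columns_of_orthonormal_rows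
    (h : ∀ j < N, ∀ k < N, ∑ x ∈ range N, ψ j x * ψ k x = if j = k then 1 else 0)
    {x y : ℕ} (hx : x < N) (hy : y < N) :
    ∑ j ∈ range N, ψ j x * ψ j y = if x = y then 1 else 0 := by
  set P : Matrix (Fin N) (Fin N) ℝ := Matrix.of fun j x => ψ j x
  have hrows : P * P.transpose = 1 := by
    ext j k
    simp only [P, Matrix.mul_apply, Matrix.transpose_apply, Matrix.of_apply, Matrix.one_apply,
      Fin.sum_univ_eq_sum_range (fun x => ψ j x * ψ k x), h j j.isLt k k.isLt, Fin.ext_iff]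
  have hcols : P.transpose * P = 1 := mul_eq_one_comm.mp hrows
  replace hcols := congrFun (congrFun hcols ⟨x, hx⟩) ⟨y, hy⟩
  simpa only [P, Matrix.mul_apply, Matrix.transpose_apply, Matrix.of_apply, Matrix.one_apply,
    Fin.sum_univ_eq_sum_range (fun j => ψ j x * ψ j y), Fin.mk.injEq] using hcols

lemma sum_sum_sq_eq_sum_sq_of_complete
    (hψ : ∀ x < N, ∀ y < N, ∑ j ∈ range N, ψ j x * ψ j y = if x = y then 1 else 0)
    {ι : Type*} [DecidableEq ι] (s : Finset ι) (c : ι → ℝ) {u v : ι → ℕ}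
    (hu : ∀ p ∈ s, u p < N) (hv : ∀ p ∈ s, v p < N)
    (huv : Set.InjOn (fun p => (u p, v p)) s) :
    ∑ j ∈ range N, ∑ j' ∈ range N, (∑ p ∈ s, c p * ψ j (u p) * ψ j' (v p)) ^ 2 =
      ∑ p ∈ s, c p ^ 2 := by
  have hpair : ∀ p ∈ s, ∀ q ∈ s, ∑ j ∈ range N, ∑ j' ∈ range N,
      c p * ψ j (u p) * ψ j' (v p) * (c q * ψ j (u q) * ψ j' (v q)) =
        if p = q then c p ^ 2 else 0 := by
    intro p hp q hq
    have hsplit : ∑ j ∈ range N, ∑ j' ∈ range N,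
        c p * ψ j (u p) * ψ j' (v p) * (c q * ψ j (u q) * ψ j' (v q)) =
          c p * c q * (∑ j ∈ range N, ψ j (u p) * ψ j (u q)) *
            ∑ j' ∈ range N, ψ j' (v p) * ψ j' (v q) := by
      rw [mul_assoc, sum_mul_sum, mul_sum]
      exact sum_congr rfl fun _ _ => by
        rw [mul_sum]
        exact sum_congr rfl fun _ _ => by ring
    rw [hsplit, hψ _ (hu p hp) _ (hu q hq), hψ _ (hv p hp) _ (hv q hq)]
    by_cases hpq : p = q
    · simp [hpq, sq]
    · have : ¬(u p = u q ∧ v p = v q) := fun h => hpq (huv hp hq (Prod.ext h.1 h.2))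
      by_cases hu' : u p = u q <;> simp_all
  simp only [sq, sum_mul_sum]
  rw [sum_sum_sum_sum_comm, sum_congr rfl fun p hp => sum_congr rfl fun q hq => hpair p hp q hq]
  exact sum_congr rfl fun p hp => by rw [sum_ite_eq, if_pos hp, sq]

lemma sum_sum_kernel_mul_mul (θ : ℕ → ℕ → ℝ) (f : ℕ → ℝ) :
    ∑ x ∈ range N, ∑ y ∈ range N,
        (∑ j ∈ range N, ∑ j' ∈ range N, θ j j' * ψ j x * ψ j' x * ψ j y * ψ j' y) * f x * f y =
      ∑ j ∈ range N, ∑ j' ∈ range N, θ j j' * (∑ x ∈ range N, f x * ψ j x * ψ j' x) ^ 2 := by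
  simp only [sq, mul_sum, sum_mul]
  rw [sum_sum_sum_sum_comm]
  exact sum_congr rfl fun _ _ => sum_congr rfl fun _ _ =>
    sum_congr rfl fun _ _ => sum_congr rfl fun _ _ => by ring

lemma sum_sum_one_sub_kernel_mul_mul
    (hψ : ∀ x < N, ∀ y < N, ∑ j ∈ range N, ψ j x * ψ j y = if x = y then 1 else 0)
    (θ : ℕ → ℕ → ℝ) (f : ℕ → ℝ) :
    ∑ x ∈ range N, ∑ y ∈ range N, ((if x = y then 1 else 0) -
        ∑ j ∈ range N, ∑ j' ∈ range N, θ j j' * ψ j x * ψ j' x * ψ j y * ψ j' y) * f x * f y =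
      ∑ j ∈ range N, ∑ j' ∈ range N, (1 - θ j j') * (∑ x ∈ range N, f x * ψ j x * ψ j' x) ^ 2 := by
  have hdiag : ∑ x ∈ range N, ∑ y ∈ range N, (if x = y then 1 else 0) * f x * f y =
      ∑ j ∈ range N, ∑ j' ∈ range N, (∑ x ∈ range N, f x * ψ j x * ψ j' x) ^ 2 := by
    rw [sum_sum_sq_eq_sum_sq_of_complete hψ _ f (fun _ => mem_range.mp) (fun _ => mem_range.mp)
      fun _ _ _ _ h => congrArg Prod.fst h]
    refine sum_congr rfl fun x hx => ?_
    simp [sq, ite_mul, sum_ite_eq, hx]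
  simp only [sub_mul, sum_sub_distrib, hdiag, sum_sum_kernel_mul_mul, one_mul]

lemma sum_sum_sq_sum_wronskian
    (hψ : ∀ x < N + 1, ∀ y < N + 1, ∑ j ∈ range (N + 1), ψ j x * ψ j y = if x = y then 1 else 0)
    (g : ℕ → ℝ) :
    ∑ j ∈ range (N + 1), ∑ j' ∈ range (N + 1),
        (∑ x ∈ range N, g x * wronskian (ψ j) (ψ j') x) ^ 2 =
      2 * ∑ x ∈ range N, g x ^ 2 := by
  -- the Wronskian at `x` pairs the sites `(x + 1, x)` and `(x, x + 1)`; all these pairs differ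
  have hpairs : ∀ j j', ∑ x ∈ range N, g x * wronskian (ψ j) (ψ j') x =
      ∑ p ∈ (range N).disjSum (range N), Sum.elim g (-g) p *
        ψ j (Sum.elim (· + 1) id p) * ψ j' (Sum.elim id (· + 1) p) := by
    intro j j'
    simp only [sum_disjSum, Sum.elim_inl, Sum.elim_inr, id, Pi.neg_apply, neg_mul, sum_neg_distrib,
      ← sub_eq_add_neg, ← sum_sub_distrib, wronskian]
    exact sum_congr rfl fun _ _ => by ring
  simp only [hpairs]
  rw [sum_sum_sq_eq_sum_sq_of_complete hψ]
  · simp [sum_disjSum, two_mul]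
  · rintro (x | x) hx <;> simp at hx ⊢ <;> omega
  · rintro (x | x) hx <;> simp at hx ⊢ <;> omega
  · rintro (x | x) - (y | y) - h <;> simp at h ⊢ <;> omega

end OrthonormalSystem

lemma sum_cos_mul_cos (n : ℕ) {j k : ℕ} (hj : j < n + 1) (hk : k < n + 1) :
    ∑ x ∈ range (n + 1), cos (π * j * (2 * x + 1) / (2 * (n + 1))) *
        cos (π * k * (2 * x + 1) / (2 * (n + 1))) =
      (n + 1) / 2 * ((if j = k then 1 else 0) + if j = 0 ∧ k = 0 then 1 else 0) := by
  have hprod (x : ℕ) : cos (π * j * (2 * x + 1) / (2 * (n + 1))) *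
      cos (π * k * (2 * x + 1) / (2 * (n + 1))) =
        (cos ((2 * x + 1) * (((j - k : ℤ) : ℝ) * π / (2 * (n + 1 : ℕ)))) +
          cos ((2 * x + 1) * (((j + k : ℤ) : ℝ) * π / (2 * (n + 1 : ℕ))))) / 2 := by
    push_cast
    rw [show (2 * x + 1) * ((j - k) * π / (2 * (n + 1))) =
        π * j * (2 * x + 1) / (2 * (n + 1)) - π * k * (2 * x + 1) / (2 * (n + 1)) by ring,
      show (2 * x + 1) * ((j + k) * π / (2 * (n + 1))) =
        π * j * (2 * x + 1) / (2 * (n + 1)) + π * k * (2 * x + 1) / (2 * (n + 1)) by ring,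
      cos_sub, cos_add]
    ring
  simp only [hprod, ← sum_div, sum_add_distrib]
  rw [sum_cos_odd_mul_pi_div _ (by rw [abs_lt]; push_cast; omega),
    sum_cos_odd_mul_pi_div _ (by rw [abs_lt]; push_cast; omega)]
  have h₁ : ((j : ℤ) - k = 0) ↔ j = k := by omega
  have h₂ : ((j : ℤ) + k = 0) ↔ (j = 0 ∧ k = 0) := by omega
  simp only [h₁, h₂]
  push_cast
  split_ifs <;> ring

lemma psiN_orthonormal (n : ℕ) {j k : ℕ} (hj : j < n + 1) (hk : k < n + 1) :
    ∑ x ∈ range (n + 1), psiN n j x * psiN n k x = if j = k then 1 else 0 := by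
  simp only [psiN, mul_mul_mul_comm _ (cos _), ← mul_sum, sum_cos_mul_cos n hj hk]
  by_cases hjk : j = k
  · subst hjk
    rw [← sq, sq_sqrt (by split_ifs <;> positivity)]
    simp only [and_self]
    field_simp
    split_ifs <;> norm_num
  · have : ¬(j = 0 ∧ k = 0) := fun h => hjk (h.1.trans h.2.symm)
    simp [hjk, this]

lemma psiN_complete (n : ℕ) {x y : ℕ} (hx : x < n + 1) (hy : y < n + 1) :
    ∑ j ∈ range (n + 1), psiN n j x * psiN n j y = if x = y then 1 else 0 :=
  orthonormal_columns_of_orthonormal_rows (fun _ hj _ hk => psiN_orthonormal n hj hk) hx hy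

lemma isNeumannEigenfunction_psiN (n j : ℕ) :
    IsNeumannEigenfunction (4 * sin (π * j / (2 * (n + 1))) ^ 2) (psiN n j) := by
  convert isNeumannEigenfunction_cos (√((2 - if j = 0 then 1 else 0) / (n + 1)))
    (π * j / (2 * (n + 1))) using 2 with x
  rw [psiN]
  ring_nf

lemma psiN_succ_self (n j : ℕ) : psiN n j (n + 1) = psiN n j n := by
  have h : π * j * (2 * ((n + 1 : ℕ) : ℝ) + 1) / (2 * (n + 1)) =
      (j : ℝ) * (2 * π) - π * j * (2 * n + 1) / (2 * (n + 1)) := by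
    field_simp
    push_cast
    ring
  rw [psiN, psiN, h, cos_nat_mul_two_pi_sub]

lemma muN_mem_Icc (n : ℕ) (ω₀ : ℝ) (j : ℕ) : muN n ω₀ j ∈ Set.Icc (ω₀ ^ 2) (ω₀ ^ 2 + 4) := by
  have := sin_sq_le_one (π * j / (2 * (n + 1)))
  constructor <;> simp only [muN] <;> nlinarith [sq_nonneg (sin (π * j / (2 * (n + 1))))]

lemma muN_sub_muN_mul_sum (n : ℕ) (ω₀ : ℝ) (j j' : ℕ) (f : ℕ → ℝ) :
    (muN n ω₀ j - muN n ω₀ j') * ∑ x ∈ range (n + 1), f x * psiN n j x * psiN n j' x =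
      ∑ x ∈ range n, (f (x + 1) - f x) * wronskian (psiN n j) (psiN n j') x := by
  have h := (isNeumannEigenfunction_psiN n j).sum_by_parts (isNeumannEigenfunction_psiN n j') f n
  rw [wronskian, psiN_succ_self, psiN_succ_self, sub_self, mul_zero, zero_sub] at h
  simp only [muN]
  linear_combination -h

lemma sq_sub_div_le_one_sub_thetaK {γ c c' S D : ℝ} (hγ : γ ≠ 0) (hc : 0 ≤ c) (hc' : 0 ≤ c')
    (hS : c + c' ≤ S) (hD : (c - c') ^ 2 ≤ D) :
    (c - c') ^ 2 / (8 * γ ^ 2 * S + D) ≤ 1 - thetaK γ c c' := by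
  rcases (add_nonneg hc hc').eq_or_lt with h | h
  · obtain ⟨rfl, rfl⟩ : c = 0 ∧ c' = 0 := ⟨by linarith, by linarith⟩
    simp [thetaK]
  have hthetaK : 1 - thetaK γ c c' = (c - c') ^ 2 / (8 * γ ^ 2 * (c + c') + (c - c') ^ 2) := by
    rw [thetaK]
    field_simp
    ring
  rw [hthetaK]
  exact div_le_div_of_nonneg_left (sq_nonneg _) (by positivity) (by gcongr)

theorem kerM_coercivity_general (ω₀ γ : ℝ) (hγ : 0 < γ) :
    ∃ c > 0, ∀ n : ℕ, 1 ≤ n → ∀ f : ℕ → ℝ,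
      c * ∑ x ∈ Finset.range n, (f (x + 1) - f x) ^ 2 ≤
        ∑ x ∈ Finset.range (n + 1), ∑ y ∈ Finset.range (n + 1),
          ((if x = y then 1 else 0) - kerM n ω₀ γ x y) * f x * f y := by
  set C := 8 * γ ^ 2 * (2 * ω₀ ^ 2 + 8) + 16
  refine ⟨2 / C, by positivity, fun n _ f => ?_⟩
  have hψ : ∀ x < n + 1, ∀ y < n + 1, ∑ j ∈ range (n + 1), psiN n j x * psiN n j y =
      if x = y then 1 else 0 := fun _ hx _ hy => psiN_complete n hx hy
  set μ := muN n ω₀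
  set a := fun j j' => ∑ x ∈ range (n + 1), f x * psiN n j x * psiN n j' x
  have hgap (j j' : ℕ) : (μ j - μ j') ^ 2 / C ≤ 1 - thetaK γ (μ j) (μ j') := by
    obtain ⟨hj, hj'⟩ := muN_mem_Icc n ω₀ j
    obtain ⟨hk, hk'⟩ := muN_mem_Icc n ω₀ j'
    exact sq_sub_div_le_one_sub_thetaK hγ.ne' ((sq_nonneg ω₀).trans hj)
      ((sq_nonneg ω₀).trans hk) (by linarith) (by nlinarith)
  calc 2 / C * ∑ x ∈ range n, (f (x + 1) - f x) ^ 2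
      = ∑ j ∈ range (n + 1), ∑ j' ∈ range (n + 1), (μ j - μ j') ^ 2 / C * a j j' ^ 2 := by
        simp only [div_mul_eq_mul_div, ← mul_pow, a, μ, muN_sub_muN_mul_sum, ← sum_div,
          sum_sum_sq_sum_wronskian hψ]
    _ ≤ ∑ j ∈ range (n + 1), ∑ j' ∈ range (n + 1), (1 - thetaK γ (μ j) (μ j')) * a j j' ^ 2 := by
        gcongr with j _ j' _
        exact hgap j j'
    _ = _ := (sum_sum_one_sub_kernel_mul_mul hψ (fun j j' => thetaK γ (μ j) (μ j')) f).symm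

/-- Uniform coercivity of `Id − M`: there is `c* > 0`, independent of `n`,
with `Σ_{x,y} (δ_{x,y} − M_{x,y}) f_x f_y ≥ c* Σ_x (f_{x+1} − f_x)²` for every `f ∈ ℝ^{n+1}`. -/
theorem kerM_coercivity (ω₀ γ : ℝ) (hω : 0 < ω₀) (hγ : 0 < γ) :
    ∃ c > 0, ∀ n : ℕ, 1 ≤ n → ∀ f : ℕ → ℝ,
      c * ∑ x ∈ Finset.range n, (f (x + 1) - f x) ^ 2 ≤
        ∑ x ∈ Finset.range (n + 1), ∑ y ∈ Finset.range (n + 1),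
          ((if x = y then 1 else 0) - kerM n ω₀ γ x y) * f x * f y :=
  kerM_coercivity_general ω₀ γ hγ

end
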